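/- arXiv:2308.14096 — 3 statements merged into one kernel-verified Lean document; each statement's English description precedes it below -/
import Mathlib

section
/- Let (P, ≤, ·, P#) be a partial combinatory algebra. Let PER(P) be the set of binary relations on P that are downward closed for the componentwise order, symmetric and transitive, ordered by inclusion (this is a complete lattice whose meets are intersections). Define R → T := { (x,x') ∈ P × P | for all (y,y') ∈ R, x·y and x'·y' are defined and (x·y, x'·y') ∈ T }. Then (PER(P), ⊆, →) is an arrow structure compatible with joins (i.e., (⨆_{i ∈ I} R_i) → T = ⨅_{i ∈ I} (R_i → T)), and S := { R ∈ PER(P) | there exists (x,y) ∈ R with x, y ∈ P# } is a separator on it. -/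
/-- The combinator 𝐤 := ⨅ a b, a → (b → a). -/
def kC {A : Type*} [CompleteLattice A] (arr : A → A → A) : A :=
  ⨅ (a : A) (b : A), arr a (arr b a)

/-- The combinator 𝐬 := ⨅ a b c, (a → (b → c)) → ((a → b) → (a → c)). -/
def sC {A : Type*} [CompleteLattice A] (arr : A → A → A) : A :=
  ⨅ (a : A) (b : A) (c : A),
    arr (arr a (arr b c)) (arr (arr a b) (arr a c))

/-- The combinator 𝐚 := ⨅_{x, B ⊆ Im(→)} (⨅_{b ∈ B} x → b) → (x → ⨅ B). -/
def aC {A : Type*} [CompleteLattice A] (arr : A → A → A) : A :=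
  ⨅ (x : A) (B : Set A) (_ : B ⊆ Set.range fun p : A × A => arr p.1 p.2),
    arr (⨅ b ∈ B, arr x b) (arr x (sInf B))

/-- An arrow structure on a complete lattice: the implication is antitone in its
first argument and monotone in its second. -/
structure IsArrow {A : Type*} [CompleteLattice A] (arr : A → A → A) : Prop where
  mono : ∀ {a a' b b' : A}, a' ≤ a → b ≤ b' → arr a b ≤ arr a' b'

/-- A separator on an arrow structure. -/
structure IsSeparator {A : Type*} [CompleteLattice A] (arr : A → A → A) (S : Set A) : Prop where
  up : ∀ {a b : A}, a ∈ S → a ≤ b → b ∈ S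
  mp : ∀ {a b : A}, arr a b ∈ S → a ∈ S → b ∈ S
  kmem : kC arr ∈ S
  smem : sC arr ∈ S
  amem : aC arr ∈ S

/-- A partial combinatory algebra on a poset, with a filter. -/
structure PCA (P : Type*) [PartialOrder P] where
  app : P → P → Option P
  mono : ∀ {a a' b b' x : P}, app a' b' = some x → a ≤ a' → b ≤ b' →
    ∃ y, app a b = some y ∧ y ≤ x
  filt : Set P
  filt_up : ∀ {a b : P}, a ∈ filt → a ≤ b → b ∈ filt
  filt_app : ∀ {a b c : P}, a ∈ filt → b ∈ filt → app a b = some c → c ∈ filt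
  k : P
  s : P
  k_mem : k ∈ filt
  s_mem : s ∈ filt
  k_spec : ∀ a b : P, ∃ ka, app k a = some ka ∧ app ka b = some a
  s_def : ∀ a b : P, ∃ sa sab, app s a = some sa ∧ app sa b = some sab
  s_spec : ∀ {a b c ac bc x sa sab : P}, app a c = some ac → app b c = some bc →
    app ac bc = some x → app s a = some sa → app sa b = some sab →
    ∃ y, app sab c = some y ∧ y ≤ x

/-- A partial equivalence relation on a poset `P`: a downward closed (for the
componentwise order), symmetric and transitive binary relation. -/
structure PER (P : Type*) [PartialOrder P] where
  rel : Set (P × P)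
  lower : IsLowerSet rel
  symm : ∀ {x y : P}, (x, y) ∈ rel → (y, x) ∈ rel
  trans : ∀ {x y z : P}, (x, y) ∈ rel → (y, z) ∈ rel → (x, z) ∈ rel

namespace PER

variable {P : Type*} [PartialOrder P]

lemma ext' {R T : PER P} (h : R.rel = T.rel) : R = T := by
  cases R; cases T; cases h; rfl

instance : PartialOrder (PER P) where
  le R T := R.rel ⊆ T.rel
  le_refl R := subset_rfl
  le_trans R T U h1 h2 := Set.Subset.trans h1 h2
  le_antisymm R T h1 h2 := ext' (subset_antisymm h1 h2)

/-- Meets of PERs are intersections. -/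
instance : InfSet (PER P) where
  sInf s :=
    { rel := {p | ∀ R ∈ s, p ∈ R.rel}
      lower := by
        intro a b hba ha R hR
        exact R.lower hba (ha R hR)
      symm := by
        intro x y h R hR
        exact R.symm (h R hR)
      trans := by
        intro x y z h1 h2 R hR
        exact R.trans (h1 R hR) (h2 R hR) }

/-- The set of PERs on `P` is a complete lattice whose meets are intersections. -/
instance : CompleteLattice (PER P) :=
  completeLatticeOfInf (PER P) (fun s => by
    constructor
    · intro R hR
      exact fun p hp => hp R hR
    · intro T hT
      exact fun p hp R hR => hT hR hp)

end PER

/-- The implication of PERs over a pca. -/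
def perArr {P : Type*} [PartialOrder P] (Q : PCA P) (R T : PER P) : PER P where
  rel := {p | ∀ q ∈ R.rel, ∃ u v : P,
    Q.app p.1 q.1 = some u ∧ Q.app p.2 q.2 = some v ∧ (u, v) ∈ T.rel}
  lower := by
    intro a b hba ha q hq
    obtain ⟨u, v, hu, hv, huv⟩ := ha q hq
    obtain ⟨u', hu', hule⟩ := Q.mono hu hba.1 le_rfl
    obtain ⟨v', hv', hvle⟩ := Q.mono hv hba.2 le_rfl
    exact ⟨u', v', hu', hv', T.lower ⟨hule, hvle⟩ huv⟩
  symm := by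
    intro x y h q hq
    obtain ⟨u, v, hu, hv, huv⟩ := h (q.2, q.1) (R.symm hq)
    exact ⟨v, u, hv, hu, T.symm huv⟩
  trans := by
    intro x y z h1 h2 q hq
    have hq'q' : (q.2, q.2) ∈ R.rel := R.trans (R.symm hq) hq
    obtain ⟨u, v, hu, hv, huv⟩ := h1 q hq
    obtain ⟨u', v', hu', hv', huv'⟩ := h2 (q.2, q.2) hq'q'
    have huv2 : u' = v := Option.some.inj (hu'.symm.trans hv)
    exact ⟨u, v', hu, hv', T.trans huv (huv2 ▸ huv')⟩

/-!
The arrow `R → T` is the largest PER of functions sending `R` into `T`, so `R ↦ R → T`, as a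
map into the order dual, has a right adjoint: `X` goes to the largest PER of arguments sent
into `T` by `X`. Hence `(⨆ i, R i) → T = ⨅ i, (R i → T)`. For the separator, `(k, k)` and `(s, s)`
realize `𝐤` and `𝐬` directly. A realizer of `𝐚` must, uniformly in `B`, turn a realizer of
`x → b` for every `b ∈ B` into one of `x → ⨅ B`; since every `b` is itself an arrow `R → T`,
the eta-expansion `λ f y z. f y z` does this: it makes `f·y` into a total function of `z`
without changing the values that exist. It lies in the filter by combinatory completeness.
-/

namespace PER

variable {P : Type*} [PartialOrder P]

lemma mem_sInf {s : Set (PER P)} {p : P × P} : p ∈ (sInf s).rel ↔ ∀ R ∈ s, p ∈ R.rel :=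
  Iff.rfl

lemma mem_iInf {ι : Sort*} {R : ι → PER P} {p : P × P} :
    p ∈ (⨅ i, R i).rel ↔ ∀ i, p ∈ (R i).rel := by
  simp only [iInf, mem_sInf, Set.forall_mem_range]

lemma refl_right {R : PER P} {x y : P} (h : (x, y) ∈ R.rel) : (y, y) ∈ R.rel :=
  R.trans (R.symm h) h

end PER

inductive SKTerm
  | var : ℕ → SKTerm
  | K : SKTerm
  | S : SKTerm
  | app : SKTerm → SKTerm → SKTerm

namespace SKTerm

def I : SKTerm := app (app S K) K

/-- Bracket abstraction `λ* x. t`. Constants are abstracted as `K t` only when `t` is an atom,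
so that the abstraction of any term denotes a defined element. -/
def abs (x : ℕ) : SKTerm → SKTerm
  | var y => if y = x then I else app K (var y)
  | K => app K K
  | S => app K S
  | app t u => app (app S (abs x t)) (abs x u)

end SKTerm

namespace PCA

variable {P : Type*} [PartialOrder P] (Q : PCA P)

def AppLE (e a v : P) : Prop := ∃ w, Q.app e a = some w ∧ w ≤ v

variable {Q}

lemma AppLE.of_app_eq {e a v : P} (h : Q.app e a = some v) : Q.AppLE e a v := ⟨v, h, le_rfl⟩

lemma AppLE.mono {e e' a a' v : P} (h : Q.AppLE e a v) (he : e' ≤ e) (ha : a' ≤ a) :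
    Q.AppLE e' a' v := by
  obtain ⟨w, hw, hwv⟩ := h
  obtain ⟨w', hw', hw'w⟩ := Q.mono hw he ha
  exact ⟨w', hw', hw'w.trans hwv⟩

lemma AppLE.trans_le {e a v v' : P} (h : Q.AppLE e a v) (hv : v ≤ v') : Q.AppLE e a v' := by
  obtain ⟨w, hw, hwv⟩ := h
  exact ⟨w, hw, hwv.trans hv⟩

variable (Q)

lemma exists_app_k (c : P) : ∃ kc, Q.app Q.k c = some kc ∧ ∀ a, Q.app kc a = some c := by
  obtain ⟨kc, hkc, -⟩ := Q.k_spec c c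
  refine ⟨kc, hkc, fun a => ?_⟩
  obtain ⟨kc', hkc', hkc'a⟩ := Q.k_spec c a
  rwa [Option.some.inj (hkc'.symm.trans hkc)] at hkc'a

lemma exists_app_s (a b : P) : ∃ sa sab, Q.app Q.s a = some sa ∧ Q.app sa b = some sab ∧
    ∀ {c ac bc x}, Q.app a c = some ac → Q.app b c = some bc → Q.app ac bc = some x →
      Q.AppLE sab c x := by
  obtain ⟨sa, sab, hsa, hsab⟩ := Q.s_def a b
  exact ⟨sa, sab, hsa, hsab, fun hac hbc hx => Q.s_spec hac hbc hx hsa hsab⟩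

def eval (ρ : ℕ → P) : SKTerm → Option P
  | .var n => some (ρ n)
  | .K => some Q.k
  | .S => some Q.s
  | .app t u => (eval ρ t).bind fun a => (eval ρ u).bind (Q.app a)

variable {Q}

lemma eval_app_eq_some {ρ : ℕ → P} {t u : SKTerm} {w : P} :
    Q.eval ρ (t.app u) = some w ↔
      ∃ a b, Q.eval ρ t = some a ∧ Q.eval ρ u = some b ∧ Q.app a b = some w := by
  simp only [eval, Option.bind_eq_some_iff]
  exact ⟨fun ⟨a, ha, b, hb, h⟩ => ⟨a, b, ha, hb, h⟩, fun ⟨a, b, ha, hb, h⟩ => ⟨a, ha, b, hb, h⟩⟩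

lemma eval_mem_filt {ρ : ℕ → P} (hρ : ∀ n, ρ n ∈ Q.filt) :
    ∀ {t : SKTerm} {v : P}, Q.eval ρ t = some v → v ∈ Q.filt
  | .var n, _, h => Option.some.inj h ▸ hρ n
  | .K, _, h => Option.some.inj h ▸ Q.k_mem
  | .S, _, h => Option.some.inj h ▸ Q.s_mem
  | .app _ _, _, h => by
    obtain ⟨a, b, ha, hb, hab⟩ := eval_app_eq_some.mp h
    exact Q.filt_app (eval_mem_filt hρ ha) (eval_mem_filt hρ hb) hab

lemma exists_eval_K_app {ρ : ℕ → P} {t : SKTerm} {c : P} (ht : Q.eval ρ t = some c) :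
    ∃ e, Q.eval ρ (SKTerm.K.app t) = some e ∧ ∀ a, Q.AppLE e a c := by
  obtain ⟨kc, hkc, hkca⟩ := Q.exists_app_k c
  exact ⟨kc, eval_app_eq_some.mpr ⟨_, _, rfl, ht, hkc⟩, fun a => .of_app_eq (hkca a)⟩

variable (Q)

lemma exists_eval_I (ρ : ℕ → P) : ∃ i, Q.eval ρ SKTerm.I = some i ∧ ∀ a, Q.AppLE i a a := by
  obtain ⟨sk, i, hsk, hi, hspec⟩ := Q.exists_app_s Q.k Q.k
  refine ⟨i, eval_app_eq_some.mpr ⟨sk, Q.k, eval_app_eq_some.mpr ⟨_, _, rfl, rfl, hsk⟩, rfl, hi⟩,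
    fun a => ?_⟩
  obtain ⟨ka, hka, hkab⟩ := Q.exists_app_k a
  exact hspec hka hka (hkab ka)

/-- Combinatory completeness. -/
theorem exists_eval_abs (ρ : ℕ → P) (x : ℕ) :
    ∀ t : SKTerm, ∃ e, Q.eval ρ (t.abs x) = some e ∧
      ∀ a v, Q.eval (Function.update ρ x a) t = some v → Q.AppLE e a v
  | .var y => by
    by_cases hyx : y = x
    · subst hyx
      obtain ⟨i, hi, hia⟩ := Q.exists_eval_I ρ
      refine ⟨i, by simpa [SKTerm.abs] using hi, fun a v h => ?_⟩
      simp only [eval, Function.update_self, Option.some.injEq] at h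
      exact h ▸ hia a
    · obtain ⟨e, he, hea⟩ := exists_eval_K_app (Q := Q) (ρ := ρ) (t := .var y) rfl
      refine ⟨e, by simpa [SKTerm.abs, hyx] using he, fun a v h => ?_⟩
      simp only [eval, Function.update_of_ne hyx, Option.some.injEq] at h
      exact h ▸ hea a
  | .K => by
    obtain ⟨e, he, hea⟩ := exists_eval_K_app (Q := Q) (ρ := ρ) (t := .K) rfl
    exact ⟨e, he, fun a v h => Option.some.inj h ▸ hea a⟩
  | .S => by
    obtain ⟨e, he, hea⟩ := exists_eval_K_app (Q := Q) (ρ := ρ) (t := .S) rfl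
    exact ⟨e, he, fun a v h => Option.some.inj h ▸ hea a⟩
  | .app t u => by
    obtain ⟨et, het, ht⟩ := exists_eval_abs ρ x t
    obtain ⟨eu, heu, hu⟩ := exists_eval_abs ρ x u
    obtain ⟨s₁, s₂, hs₁, hs₂, hs⟩ := Q.exists_app_s et eu
    refine ⟨s₂, eval_app_eq_some.mpr ⟨s₁, eu, eval_app_eq_some.mpr ⟨_, _, rfl, het, hs₁⟩,
      heu, hs₂⟩, fun a v h => ?_⟩
    obtain ⟨vt, vu, hvt, hvu, hv⟩ := eval_app_eq_some.mp h
    obtain ⟨wt, hwt, hwtv⟩ := ht a vt hvt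
    obtain ⟨wu, hwu, hwuv⟩ := hu a vu hvu
    obtain ⟨w, hw, hwv⟩ := Q.mono hv hwtv hwuv
    exact (hs hwt hwu hw).trans_le hwv

/-- `p` realizes `λ f y z. f y z`. -/
def IsEtaExpander (p : P) : Prop :=
  ∀ f, ∃ pf, Q.app p f = some pf ∧ ∀ y, ∃ u, Q.app pf y = some u ∧
    ∀ {z fy fyz}, Q.app f y = some fy → Q.app fy z = some fyz → Q.AppLE u z fyz

open SKTerm in
theorem exists_isEtaExpander : ∃ p ∈ Q.filt, Q.IsEtaExpander p := by
  set body : SKTerm := ((var 0).app (var 1)).app (var 2)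
  set ρ : ℕ → P := fun _ => Q.k
  obtain ⟨p, hp, hpf⟩ := Q.exists_eval_abs ρ 0 (abs 1 (abs 2 body))
  refine ⟨p, eval_mem_filt (fun _ => Q.k_mem) hp, fun f => ?_⟩
  obtain ⟨e₁, he₁, he₁y⟩ := Q.exists_eval_abs (Function.update ρ 0 f) 1 (abs 2 body)
  obtain ⟨pf, hpf, hpfe₁⟩ := hpf f e₁ he₁
  refine ⟨pf, hpf, fun y => ?_⟩
  obtain ⟨e₂, he₂, he₂z⟩ :=
    Q.exists_eval_abs (Function.update (Function.update ρ 0 f) 1 y) 2 body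
  obtain ⟨u, hu, hue₂⟩ := (he₁y y e₂ he₂).mono hpfe₁ le_rfl
  refine ⟨u, hu, fun hfy hfyz => (he₂z _ _ ?_).mono hue₂ le_rfl⟩
  simp [body, eval, Function.update, hfy, hfyz]

end PCA

section Arrow

variable {P : Type*} [PartialOrder P] (Q : PCA P)

theorem perArr_isArrow : IsArrow (perArr Q) where
  mono hR hT _ hp q hq := by
    obtain ⟨u, v, hu, hv, huv⟩ := hp q (hR hq)
    exact ⟨u, v, hu, hv, hT huv⟩

def perArgs (X T : PER P) : PER P where
  rel := {q | ∀ p ∈ X.rel, ∃ u v : P,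
    Q.app p.1 q.1 = some u ∧ Q.app p.2 q.2 = some v ∧ (u, v) ∈ T.rel}
  lower := by
    intro a b hba ha p hp
    obtain ⟨u, v, hu, hv, huv⟩ := ha p hp
    obtain ⟨u', hu', hu'u⟩ := Q.mono hu le_rfl hba.1
    obtain ⟨v', hv', hv'v⟩ := Q.mono hv le_rfl hba.2
    exact ⟨u', v', hu', hv', T.lower ⟨hu'u, hv'v⟩ huv⟩
  symm := by
    intro x y h p hp
    obtain ⟨u, v, hu, hv, huv⟩ := h (p.2, p.1) (X.symm hp)
    exact ⟨v, u, hv, hu, T.symm huv⟩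
  trans := by
    intro x y z hxy hyz p hp
    obtain ⟨u, v, hu, hv, huv⟩ := hxy p hp
    obtain ⟨v', w, hv', hw, hv'w⟩ := hyz (p.2, p.2) (PER.refl_right hp)
    obtain rfl : v' = v := Option.some.inj (hv'.symm.trans hv)
    exact ⟨u, w, hu, hw, T.trans huv hv'w⟩

lemma le_perArr_iff_le_perArgs {X R T : PER P} : X ≤ perArr Q R T ↔ R ≤ perArgs Q X T :=
  ⟨fun h _ hq _ hp => h hp _ hq, fun h _ hp _ hq => h hq _ hp⟩

lemma gc_perArr_perArgs (T : PER P) :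
    GaloisConnection (fun R => OrderDual.toDual (perArr Q R T))
      (fun X => perArgs Q (OrderDual.ofDual X) T) :=
  fun _ _ => le_perArr_iff_le_perArgs Q

theorem perArr_iSup {ι : Sort*} (R : ι → PER P) (T : PER P) :
    perArr Q (⨆ i, R i) T = ⨅ i, perArr Q (R i) T :=
  (gc_perArr_perArgs Q T).l_iSup

end Arrow

section Separator

variable {P : Type*} [PartialOrder P] (Q : PCA P)

lemma k_mem_kC : (Q.k, Q.k) ∈ (kC (perArr Q)).rel := by
  refine PER.mem_iInf.mpr fun R => PER.mem_iInf.mpr fun T q hq => ?_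
  obtain ⟨kq₁, hkq₁, hkq₁r⟩ := Q.exists_app_k q.1
  obtain ⟨kq₂, hkq₂, hkq₂r⟩ := Q.exists_app_k q.2
  exact ⟨kq₁, kq₂, hkq₁, hkq₂, fun r _ => ⟨q.1, q.2, hkq₁r r.1, hkq₂r r.2, hq⟩⟩

lemma s_mem_sC : (Q.s, Q.s) ∈ (sC (perArr Q)).rel := by
  refine PER.mem_iInf.mpr fun R => PER.mem_iInf.mpr fun T => PER.mem_iInf.mpr fun U f hf => ?_
  obtain ⟨sf₁, -, hsf₁, -⟩ := Q.exists_app_s f.1 f.1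
  obtain ⟨sf₂, -, hsf₂, -⟩ := Q.exists_app_s f.2 f.2
  refine ⟨sf₁, sf₂, hsf₁, hsf₂, fun g hg => ?_⟩
  obtain ⟨sf₁', sfg₁, hsf₁', hsfg₁, hs₁⟩ := Q.exists_app_s f.1 g.1
  obtain ⟨sf₂', sfg₂, hsf₂', hsfg₂, hs₂⟩ := Q.exists_app_s f.2 g.2
  obtain rfl : sf₁' = sf₁ := Option.some.inj (hsf₁'.symm.trans hsf₁)
  obtain rfl : sf₂' = sf₂ := Option.some.inj (hsf₂'.symm.trans hsf₂)
  refine ⟨sfg₁, sfg₂, hsfg₁, hsfg₂, fun x hx => ?_⟩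
  obtain ⟨fx₁, fx₂, hfx₁, hfx₂, hfx⟩ := hf x hx
  obtain ⟨gx₁, gx₂, hgx₁, hgx₂, hgx⟩ := hg x hx
  obtain ⟨v₁, v₂, hv₁, hv₂, hv⟩ := hfx (gx₁, gx₂) hgx
  obtain ⟨w₁, hw₁, hw₁v₁⟩ := hs₁ hfx₁ hgx₁ hv₁
  obtain ⟨w₂, hw₂, hw₂v₂⟩ := hs₂ hfx₂ hgx₂ hv₂
  exact ⟨w₁, w₂, hw₁, hw₂, U.lower ⟨hw₁v₁, hw₂v₂⟩ hv⟩

variable {Q}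

lemma aC_mem_of_isEtaExpander {p : P} (hp : Q.IsEtaExpander p) :
    (p, p) ∈ (aC (perArr Q)).rel := by
  refine PER.mem_iInf.mpr fun X => PER.mem_iInf.mpr fun B => PER.mem_iInf.mpr fun hB f hf => ?_
  obtain ⟨pf₁, hpf₁, hpf₁y⟩ := hp f.1
  obtain ⟨pf₂, hpf₂, hpf₂y⟩ := hp f.2
  refine ⟨pf₁, pf₂, hpf₁, hpf₂, fun y hy => ?_⟩
  obtain ⟨u₁, hu₁, hu₁z⟩ := hpf₁y y.1
  obtain ⟨u₂, hu₂, hu₂z⟩ := hpf₂y y.2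
  refine ⟨u₁, u₂, hu₁, hu₂, PER.mem_sInf.mpr fun b hb => ?_⟩
  obtain ⟨⟨R, T⟩, rfl⟩ := hB hb
  have hfRT : f ∈ (perArr Q X (perArr Q R T)).rel := PER.mem_iInf.mp (PER.mem_iInf.mp hf _) hb
  obtain ⟨fy₁, fy₂, hfy₁, hfy₂, hfy⟩ := hfRT y hy
  intro z hz
  obtain ⟨fyz₁, fyz₂, hfyz₁, hfyz₂, hfyz⟩ := hfy z hz
  obtain ⟨w₁, hw₁, hw₁le⟩ := hu₁z hfy₁ hfyz₁
  obtain ⟨w₂, hw₂, hw₂le⟩ := hu₂z hfy₂ hfyz₂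
  exact ⟨w₁, w₂, hw₁, hw₂, T.lower ⟨hw₁le, hw₂le⟩ hfyz⟩

variable (Q)

theorem perArr_isSeparator :
    IsSeparator (perArr Q) {R : PER P | ∃ p ∈ R.rel, p.1 ∈ Q.filt ∧ p.2 ∈ Q.filt} where
  up := fun ⟨p, hp, hp₁, hp₂⟩ hRT => ⟨p, hRT hp, hp₁, hp₂⟩
  mp := by
    rintro R T ⟨f, hf, hf₁, hf₂⟩ ⟨x, hx, hx₁, hx₂⟩
    obtain ⟨u, v, hu, hv, huv⟩ := hf x hx
    exact ⟨(u, v), huv, Q.filt_app hf₁ hx₁ hu, Q.filt_app hf₂ hx₂ hv⟩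
  kmem := ⟨(Q.k, Q.k), k_mem_kC Q, Q.k_mem, Q.k_mem⟩
  smem := ⟨(Q.s, Q.s), s_mem_sC Q, Q.s_mem, Q.s_mem⟩
  amem := by
    obtain ⟨p, hp, hpη⟩ := Q.exists_isEtaExpander
    exact ⟨(p, p), aC_mem_of_isEtaExpander hpη, hp, hp⟩

end Separator

/-- Theorem 3.11: PERs over a pca form an arrow structure compatible with joins,
and the PERs containing a pair of elements of the filter form a separator on it. -/
theorem stmt3 {P : Type*} [PartialOrder P] (Q : PCA P) :
    IsArrow (perArr Q) ∧
    (∀ {ι : Type*} (R : ι → PER P) (T : PER P),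
      perArr Q (⨆ i, R i) T = ⨅ i, perArr Q (R i) T) ∧
    IsSeparator (perArr Q)
      {R : PER P | ∃ p ∈ R.rel, p.1 ∈ Q.filt ∧ p.2 ∈ Q.filt} := by
  exact ⟨perArr_isArrow Q, fun R T => perArr_iSup Q R T, perArr_isSeparator Q⟩
end

section
/- Let A be an arrow algebra with separator S. If M is an untyped λ-term with free variables among x_1, …, x_n and a_1, …, a_n ∈ S, then M^A(a_1, …, a_n) ∈ S. -/
/-- Application in an arrow structure: `a·b := ⨅ { c → d | a ≼ b → (c → d) }`. -/
def appA {A : Type*} [CompleteLattice A] (arr : A → A → A) (a b : A) : A :=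
  sInf {e | ∃ c d : A, e = arr c d ∧ a ≤ arr b (arr c d)}

/-- `∂a := ⊤ → a`. -/
def pd {A : Type*} [CompleteLattice A] (arr : A → A → A) (a : A) : A := arr ⊤ a

/-- Abstraction in an arrow structure: `λf := ⨅ x, x → ∂(f x)`. -/
def lamA {A : Type*} [CompleteLattice A] (arr : A → A → A) (f : A → A) : A :=
  ⨅ x : A, arr x (pd arr (f x))

/-- Untyped λ-terms with free variables among `x_1, …, x_n`, in de Bruijn style. -/
inductive Lam : ℕ → Type
  | var : ∀ {n : ℕ}, Fin n → Lam n
  | app : ∀ {n : ℕ}, Lam n → Lam n → Lam n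
  | abs : ∀ {n : ℕ}, Lam (n + 1) → Lam n

/-- The interpretation `M^A : A^n → A` of a λ-term in an arrow structure. -/
def Lam.interp {A : Type*} [CompleteLattice A] (arr : A → A → A) :
    ∀ {n : ℕ}, Lam n → (Fin n → A) → A
  | _, Lam.var i, ρ => ρ i
  | _, Lam.app M N, ρ => appA arr (M.interp arr ρ) (N.interp arr ρ)
  | _, Lam.abs M, ρ => lamA arr (fun a => M.interp arr (Fin.snoc ρ a))

section Aux

universe u

variable {A : Type u} [CompleteLattice A] {arr : A → A → A} {S : Set A}

/-- The image of the arrow operation. -/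
def Rng (arr : A → A → A) : Set A := Set.range fun p : A × A => arr p.1 p.2

lemma mem_Rng {c d : A} : arr c d ∈ Rng arr := ⟨(c, d), rfl⟩

lemma app_le {a b c d : A} (h : a ≤ arr b (arr c d)) : appA arr a b ≤ arr c d :=
  sInf_le ⟨c, d, rfl, h⟩

lemma app_le' {a b e : A} (h : a ≤ arr b e) (he : e ∈ Rng arr) : appA arr a b ≤ e := by
  obtain ⟨⟨c, d⟩, rfl⟩ := he; exact app_le h

lemma kC_le (a b : A) : kC arr ≤ arr a (arr b a) :=
  (iInf_le _ a).trans (iInf_le _ b)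

lemma sC_le (a b c : A) : sC arr ≤ arr (arr a (arr b c)) (arr (arr a b) (arr a c)) :=
  ((iInf_le _ a).trans (iInf_le _ b)).trans (iInf_le _ c)

lemma aC_le (x : A) {B : Set A} (hB : B ⊆ Rng arr) :
    aC arr ≤ arr (⨅ b ∈ B, arr x b) (arr x (sInf B)) :=
  ((iInf_le _ x).trans (iInf_le _ B)).trans (iInf_le _ hB)

lemma top_mem (hS : IsSeparator arr S) : (⊤ : A) ∈ S := hS.up hS.kmem le_top

lemma app_mem (hA : IsArrow arr) (hS : IsSeparator arr S) {a b : A}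
    (ha : a ∈ S) (hb : b ∈ S) : appA arr a b ∈ S := by
  set B : Set A := {e | ∃ c d : A, e = arr c d ∧ a ≤ arr b (arr c d)} with hBdef
  have hsub : B ⊆ Rng arr := by rintro e ⟨c, d, rfl, -⟩; exact mem_Rng
  have h1 : a ≤ ⨅ e ∈ B, arr b e := le_iInf₂ fun e he => by
    obtain ⟨c, d, rfl, h⟩ := he; exact h
  have h2 : aC arr ≤ arr (⨅ e ∈ B, arr b e) (arr b (sInf B)) := aC_le b hsub
  have h4 : arr b (sInf B) ∈ S := hS.mp (hS.up hS.amem h2) (hS.up ha h1)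
  exact hS.mp h4 hb

/-- Iterated arrow context: `Gf n ρ c = ρ 0 → (ρ 1 → … → (ρ (n-1) → c))`. -/
def Gf (arr : A → A → A) : ∀ n : ℕ, (Fin n → A) → A → A
  | 0, _, c => c
  | n + 1, ρ, c => Gf arr n (Fin.init ρ) (arr (ρ (Fin.last n)) c)

lemma Gf_snoc (n : ℕ) (ρ : Fin n → A) (a c : A) :
    Gf arr (n + 1) (Fin.snoc ρ a) c = Gf arr n ρ (arr a c) := by
  simp [Gf, Fin.init_snoc, Fin.snoc_last]

/-- Lifted K combinator. -/
def kap (arr : A → A → A) : ℕ → A → A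
  | 0, z => z
  | n + 1, z => kap arr n (appA arr (kC arr) z)

/-- Lifted application combinator. -/
def sig (arr : A → A → A) : ℕ → A → A → A
  | 0, x, y => appA arr x y
  | n + 1, x, y => sig arr n (sig arr n (kap arr n (sC arr)) x) y

/-- Lifted infimum combinator. -/
def alf (arr : A → A → A) : ℕ → A → A
  | 0, x => x
  | n + 1, x => sig arr n (kap arr n (aC arr)) (alf arr n x)

lemma kap_mem (hA : IsArrow arr) (hS : IsSeparator arr S) :
    ∀ (n : ℕ) {z : A}, z ∈ S → kap arr n z ∈ S
  | 0, _, hz => hz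
  | n + 1, _, hz => kap_mem hA hS n (app_mem hA hS hS.kmem hz)

lemma sig_mem (hA : IsArrow arr) (hS : IsSeparator arr S) :
    ∀ (n : ℕ) {x y : A}, x ∈ S → y ∈ S → sig arr n x y ∈ S
  | 0, _, _, hx, hy => app_mem hA hS hx hy
  | n + 1, _, _, hx, hy =>
      sig_mem hA hS n (sig_mem hA hS n (kap_mem hA hS n hS.smem) hx) hy

lemma alf_mem (hA : IsArrow arr) (hS : IsSeparator arr S) :
    ∀ (n : ℕ) {x : A}, x ∈ S → alf arr n x ∈ S
  | 0, _, hx => hx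
  | n + 1, _, hx => sig_mem hA hS n (kap_mem hA hS n hS.amem) (alf_mem hA hS n hx)

lemma kap_le (hA : IsArrow arr) :
    ∀ (n : ℕ) (ι : Type u) (V : (Fin n → A) → ι → Prop) (c : (Fin n → A) → ι → A) (z : A),
      (∀ ρ i, V ρ i → z ≤ c ρ i) →
      ∀ ρ i, V ρ i → kap arr n z ≤ Gf arr n ρ (c ρ i)
  | 0, ι, V, c, z, hz, ρ, i, hV => hz ρ i hV
  | n + 1, ι, V, c, z, hz, ρ, i, hV => by
    obtain ⟨ρ', a, rfl⟩ : ∃ ρ' a, ρ = Fin.snoc ρ' a :=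
      ⟨_, _, (Fin.snoc_init_self ρ).symm⟩
    rw [Gf_snoc]
    exact kap_le hA n (ι × A) (fun σ p => V (Fin.snoc σ p.2) p.1)
      (fun σ p => arr p.2 (c (Fin.snoc σ p.2) p.1)) (appA arr (kC arr) z)
      (fun σ p hV' => (app_le (kC_le z p.2)).trans (hA.mono le_rfl (hz _ p.1 hV')))
      ρ' (i, a) hV

lemma sig_le (hA : IsArrow arr) :
    ∀ (n : ℕ) (ι : Type u) (V : (Fin n → A) → ι → Prop)
      (B C : (Fin n → A) → ι → A) (x y : A),
      (∀ ρ i, V ρ i → C ρ i ∈ Rng arr) →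
      (∀ ρ i, V ρ i → x ≤ Gf arr n ρ (arr (B ρ i) (C ρ i))) →
      (∀ ρ i, V ρ i → y ≤ Gf arr n ρ (B ρ i)) →
      ∀ ρ i, V ρ i → sig arr n x y ≤ Gf arr n ρ (C ρ i)
  | 0, ι, V, B, C, x, y, hC, hx, hy, ρ, i, hV =>
      app_le' ((hx ρ i hV).trans (hA.mono (hy ρ i hV) le_rfl)) (hC ρ i hV)
  | n + 1, ι, V, B, C, x, y, hC, hx, hy, ρ, i, hV => by
    obtain ⟨ρ', a, rfl⟩ : ∃ ρ' a, ρ = Fin.snoc ρ' a :=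
      ⟨_, _, (Fin.snoc_init_self ρ).symm⟩
    rw [Gf_snoc]
    have h1 := sig_le hA n (ι × A) (fun σ p => V (Fin.snoc σ p.2) p.1)
      (fun σ p => arr p.2 (arr (B (Fin.snoc σ p.2) p.1) (C (Fin.snoc σ p.2) p.1)))
      (fun σ p => arr (arr p.2 (B (Fin.snoc σ p.2) p.1)) (arr p.2 (C (Fin.snoc σ p.2) p.1)))
      (kap arr n (sC arr)) x
      (fun _ _ _ => mem_Rng)
      (kap_le hA n (ι × A) _ _ _ (fun σ p _ => sC_le p.2 _ _))
      (fun σ p hV' => by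
        have := hx (Fin.snoc σ p.2) p.1 hV'
        rwa [Gf_snoc] at this)
    exact sig_le hA n (ι × A) (fun σ p => V (Fin.snoc σ p.2) p.1)
      (fun σ p => arr p.2 (B (Fin.snoc σ p.2) p.1))
      (fun σ p => arr p.2 (C (Fin.snoc σ p.2) p.1))
      (sig arr n (kap arr n (sC arr)) x) y
      (fun _ _ _ => mem_Rng) h1
      (fun σ p hV' => by
        have := hy (Fin.snoc σ p.2) p.1 hV'
        rwa [Gf_snoc] at this)
      ρ' (i, a) hV

lemma alf_le (hA : IsArrow arr) :
    ∀ (n : ℕ) (ι : Type u) (V : (Fin n → A) → ι → Prop)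
      (Bf : (Fin n → A) → ι → Set A) (x : A),
      (∀ ρ i, V ρ i → Bf ρ i ⊆ Rng arr) →
      (∀ ρ i, V ρ i → ∀ e ∈ Bf ρ i, x ≤ Gf arr n ρ e) →
      ∀ ρ i, V ρ i → alf arr n x ≤ Gf arr n ρ (sInf (Bf ρ i))
  | 0, ι, V, Bf, x, hB, hx, ρ, i, hV => le_sInf fun e he => hx ρ i hV e he
  | n + 1, ι, V, Bf, x, hB, hx, ρ, i, hV => by
    obtain ⟨ρ', a, rfl⟩ : ∃ ρ' a, ρ = Fin.snoc ρ' a :=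
      ⟨_, _, (Fin.snoc_init_self ρ).symm⟩
    rw [Gf_snoc]
    have h1 := alf_le hA n (ι × A) (fun σ p => V (Fin.snoc σ p.2) p.1)
      (fun σ p => (arr p.2) '' Bf (Fin.snoc σ p.2) p.1) x
      (fun σ p _ => by rintro e ⟨e₀, -, rfl⟩; exact mem_Rng)
      (fun σ p hV' e he => by
        obtain ⟨e₀, he₀, rfl⟩ := he
        have := hx (Fin.snoc σ p.2) p.1 hV' e₀ he₀
        rwa [Gf_snoc] at this)
    exact sig_le hA n (ι × A) (fun σ p => V (Fin.snoc σ p.2) p.1)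
      (fun σ p => sInf ((arr p.2) '' Bf (Fin.snoc σ p.2) p.1))
      (fun σ p => arr p.2 (sInf (Bf (Fin.snoc σ p.2) p.1)))
      (kap arr n (aC arr)) (alf arr n x)
      (fun _ _ _ => mem_Rng)
      (kap_le hA n (ι × A) _ _ _ (fun σ p hV' => by
        have := aC_le p.2 (hB (Fin.snoc σ p.2) p.1 hV')
        rwa [← sInf_image] at this))
      h1 ρ' (i, a) hV

lemma peel (hS : IsSeparator arr S) :
    ∀ (n : ℕ) (ρ : Fin n → A) (c r : A), (∀ i, ρ i ∈ S) → r ∈ S →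
      r ≤ Gf arr n ρ c → c ∈ S
  | 0, _, _, _, _, hr, h => hS.up hr h
  | n + 1, ρ, c, r, hρ, hr, h =>
      hS.mp (peel hS n (Fin.init ρ) (arr (ρ (Fin.last n)) c) r
        (fun i => hρ _) hr h) (hρ _)

lemma var_le (hA : IsArrow arr) (hS : IsSeparator arr S) :
    ∀ (n : ℕ) (i : Fin n), ∃ r ∈ S, ∀ ρ : Fin n → A,
      r ≤ Gf arr n ρ (pd arr (ρ i))
  | 0, i => i.elim0
  | n + 1, i => by
    induction i using Fin.lastCases with
    | last =>
      refine ⟨kap arr n (kC arr), kap_mem hA hS n hS.kmem, fun ρ => ?_⟩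
      obtain ⟨ρ', a, rfl⟩ : ∃ ρ' a, ρ = Fin.snoc ρ' a :=
        ⟨_, _, (Fin.snoc_init_self ρ).symm⟩
      rw [Fin.snoc_last, Gf_snoc]
      exact kap_le hA n A (fun _ _ => True) (fun _ b => arr b (pd arr b)) (kC arr)
        (fun _ b _ => kC_le b ⊤) ρ' a trivial
    | cast j =>
      obtain ⟨r, hrS, hr⟩ := var_le hA hS n j
      refine ⟨sig arr n (kap arr n (kC arr)) r,
        sig_mem hA hS n (kap_mem hA hS n hS.kmem) hrS, fun ρ => ?_⟩
      obtain ⟨ρ', a, rfl⟩ : ∃ ρ' a, ρ = Fin.snoc ρ' a :=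
        ⟨_, _, (Fin.snoc_init_self ρ).symm⟩
      rw [Fin.snoc_castSucc, Gf_snoc]
      exact sig_le hA n A (fun _ _ => True)
        (fun σ _ => pd arr (σ j)) (fun σ b => arr b (pd arr (σ j)))
        (kap arr n (kC arr)) r
        (fun _ _ _ => mem_Rng)
        (kap_le hA n A _ _ _ (fun σ b _ => kC_le _ _))
        (fun σ _ _ => hr σ) ρ' a trivial

lemma interp_le (hA : IsArrow arr) (hS : IsSeparator arr S) :
    ∀ {n : ℕ} (M : Lam n), ∃ r ∈ S, ∀ ρ : Fin n → A,
      r ≤ Gf arr n ρ (pd arr (M.interp arr ρ)) := by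
  intro n M
  induction M with
  | @var n i => exact var_le hA hS n i
  | @app n M N ihM ihN =>
    obtain ⟨r, hrS, hr⟩ := ihM
    obtain ⟨s, hsS, hs⟩ := ihN
    set Bset : (Fin n → A) → Set A := fun ρ =>
      {e | ∃ c d : A, e = arr c d ∧ M.interp arr ρ ≤ arr (N.interp arr ρ) (arr c d)}
      with hBset
    have hsub : ∀ ρ, Bset ρ ⊆ Rng arr := by
      intro ρ; rintro e ⟨c, d, rfl, -⟩; exact mem_Rng
    have h1 := sig_le hA n (A × A)
      (fun ρ p => M.interp arr ρ ≤ arr (N.interp arr ρ) (arr p.1 p.2))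
      (fun ρ _ => pd arr (M.interp arr ρ))
      (fun ρ p => arr (pd arr (N.interp arr ρ)) (arr ⊤ (arr p.1 p.2)))
      (kap arr n (sC arr)) r
      (fun _ _ _ => mem_Rng)
      (kap_le hA n (A × A) _ _ _ (fun ρ p hV =>
        (sC_le ⊤ (N.interp arr ρ) (arr p.1 p.2)).trans
          (hA.mono (hA.mono le_rfl hV) le_rfl)))
      (fun ρ _ _ => hr ρ)
    have h2 := sig_le hA n (A × A)
      (fun ρ p => M.interp arr ρ ≤ arr (N.interp arr ρ) (arr p.1 p.2))
      (fun ρ _ => pd arr (N.interp arr ρ))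
      (fun ρ p => arr ⊤ (arr p.1 p.2))
      (sig arr n (kap arr n (sC arr)) r) s
      (fun _ _ _ => mem_Rng) h1 (fun ρ _ _ => hs ρ)
    have h3 := alf_le hA n A (fun _ _ => True)
      (fun ρ _ => (arr ⊤) '' Bset ρ)
      (sig arr n (sig arr n (kap arr n (sC arr)) r) s)
      (fun ρ _ _ => by rintro e ⟨e₀, -, rfl⟩; exact mem_Rng)
      (fun ρ _ _ e he => by
        obtain ⟨e₀, ⟨c, d, rfl, hV⟩, rfl⟩ := he
        exact h2 ρ (c, d) hV)
    have h4 := sig_le hA n A (fun _ _ => True)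
      (fun ρ _ => sInf ((arr ⊤) '' Bset ρ))
      (fun ρ _ => arr ⊤ (sInf (Bset ρ)))
      (kap arr n (aC arr))
      (alf arr n (sig arr n (sig arr n (kap arr n (sC arr)) r) s))
      (fun _ _ _ => mem_Rng)
      (kap_le hA n A _ _ _ (fun ρ _ _ => by
        have := aC_le (⊤ : A) (hsub ρ)
        rwa [← sInf_image] at this))
      h3
    refine ⟨_, sig_mem hA hS n (kap_mem hA hS n hS.amem)
      (alf_mem hA hS n (sig_mem hA hS n
        (sig_mem hA hS n (kap_mem hA hS n hS.smem) hrS) hsS)),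
      fun ρ => h4 ρ ⊤ trivial⟩
  | @abs n M ih =>
    obtain ⟨r, hrS, hr⟩ := ih
    have h1 := alf_le hA n A (fun _ _ => True)
      (fun ρ _ => Set.range fun b => arr b (pd arr (M.interp arr (Fin.snoc ρ b)))) r
      (fun ρ _ _ => by rintro e ⟨b, rfl⟩; exact mem_Rng)
      (fun ρ _ _ e he => by
        obtain ⟨b, rfl⟩ := he
        have := hr (Fin.snoc ρ b)
        rwa [Gf_snoc] at this)
    have h2 := sig_le hA n A (fun _ _ => True)
      (fun ρ _ => lamA arr fun b => M.interp arr (Fin.snoc ρ b))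
      (fun ρ _ => arr ⊤ (lamA arr fun b => M.interp arr (Fin.snoc ρ b)))
      (kap arr n (kC arr)) (alf arr n r)
      (fun _ _ _ => mem_Rng)
      (kap_le hA n A _ _ _ (fun ρ _ _ => kC_le _ ⊤))
      (fun ρ _ _ => by
        have := h1 ρ ⊤ trivial
        rwa [sInf_range] at this)
    exact ⟨_, sig_mem hA hS n (kap_mem hA hS n hS.kmem) (alf_mem hA hS n hrS),
      fun ρ => h2 ρ ⊤ trivial⟩

end Aux

/-- Theorem 4.9: the interpretation of a λ-term at elements of a separator
belongs to the separator. -/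
theorem stmt12 {A : Type*} [CompleteLattice A] {arr : A → A → A} {S : Set A}
    (hA : IsArrow arr) (hS : IsSeparator arr S) {n : ℕ} (M : Lam n)
    (a : Fin n → A) (ha : ∀ i, a i ∈ S) :
    M.interp arr a ∈ S := by
  obtain ⟨r, hrS, hr⟩ := interp_le hA hS M
  exact hS.mp (peel hS n a _ r ha hrS (hr a)) (top_mem hS)
end

section
/- Let A = (A, ≼, →, S) be an arrow algebra, with logical preorder a ⊢ b iff a → b ∈ S, and a × b := ⨅_{z ∈ A} z → ∂( z·(∂a)·(∂b) ). Then → is the Heyting implication for ⊢: for all a, b, c ∈ A one has c ⊢ a → b if and only if c × a ⊢ b. -/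
/-- The logical preorder: `a ⊢ b` iff `a → b ∈ S`. -/
def entails {A : Type*} [CompleteLattice A] (arr : A → A → A) (S : Set A) (a b : A) : Prop :=
  arr a b ∈ S

/-- The logical conjunction: `a × b := ⨅ z, z → ∂(z·(∂a)·(∂b))`. -/
def meetA {A : Type*} [CompleteLattice A] (arr : A → A → A) (a b : A) : A :=
  ⨅ z : A, arr z (pd arr (appA arr (appA arr z (pd arr a)) (pd arr b)))

section Aux
variable {A : Type*} [CompleteLattice A] {arr : A → A → A} {S : Set A}

private lemma kle (x y : A) : kC arr ≤ arr x (arr y x) :=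
  le_trans (iInf_le _ x) (iInf_le _ y)

private lemma sle (x y z : A) :
    sC arr ≤ arr (arr x (arr y z)) (arr (arr x y) (arr x z)) :=
  le_trans (iInf_le _ x) (le_trans (iInf_le _ y) (iInf_le _ z))

private lemma ale (x : A) {B : Set A}
    (hB : B ⊆ Set.range fun p : A × A => arr p.1 p.2) :
    aC arr ≤ arr (⨅ b ∈ B, arr x b) (arr x (sInf B)) :=
  le_trans (iInf_le _ x) (le_trans (iInf_le _ B) (iInf_le _ hB))

private lemma apple {u v c d : A} (h : u ≤ arr v (arr c d)) :
    appA arr u v ≤ arr c d :=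
  sInf_le ⟨c, d, rfl, h⟩

variable (hA : IsArrow arr) (hS : IsSeparator arr S)
include hA hS
set_option linter.unusedSectionVars false

private lemma aCapp (u v : A) : aC arr ≤ arr u (arr v (appA arr u v)) := by
  have hB : {e | ∃ c d : A, e = arr c d ∧ u ≤ arr v (arr c d)} ⊆
      Set.range fun p : A × A => arr p.1 p.2 := by
    rintro e ⟨cc, dd, rfl, -⟩; exact ⟨(cc, dd), rfl⟩
  refine le_trans (ale v hB) (hA.mono ?_ le_rfl)
  refine le_iInf₂ fun e he => ?_
  obtain ⟨cc, dd, rfl, h⟩ := he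
  exact h


private lemma Sapp {u v : A} (hu : u ∈ S) (hv : v ∈ S) : appA arr u v ∈ S :=
  hS.mp (hS.mp (hS.up hS.amem (aCapp hA hS u v)) hu) hv

private lemma Stop : (⊤ : A) ∈ S := hS.up hS.kmem le_top

private lemma arrTop (x : A) : arr x ⊤ ∈ S :=
  hS.mp (hS.up hS.kmem (kle ⊤ x)) (Stop hA hS)

private lemma entRefl (u : A) : arr u u ∈ S := by
  have h1 : arr u (arr ⊤ u) ∈ S := hS.up hS.kmem (kle u ⊤)
  have h2 : arr (arr u ⊤) (arr u u) ∈ S := hS.mp (hS.up hS.smem (sle u ⊤ u)) h1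
  exact hS.mp h2 (arrTop hA hS u)

private lemma entTrans {x y z : A} (h1 : arr x y ∈ S) (h2 : arr y z ∈ S) :
    arr x z ∈ S :=
  hS.mp (hS.mp (hS.up hS.smem (sle x y z))
    (hS.mp (hS.up hS.kmem (kle (arr y z) x)) h2)) h1

private lemma entMp {w x y : A} (h1 : arr w (arr x y) ∈ S) (h2 : arr w x ∈ S) :
    arr w y ∈ S :=
  hS.mp (hS.mp (hS.up hS.smem (sle w x y)) h1) h2

private lemma entOfS (x : A) {v : A} (hv : v ∈ S) : arr x v ∈ S :=
  hS.mp (hS.up hS.kmem (kle v x)) hv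

private lemma entOfLe {x y : A} (h : x ≤ y) : arr x y ∈ S :=
  hS.up (entRefl hA hS x) (hA.mono le_rfl h)

private lemma entArrMono (z : A) {x y : A} (h : arr x y ∈ S) :
    arr (arr z x) (arr z y) ∈ S :=
  hS.mp (hS.up hS.smem (sle z x y)) (entOfS hA hS z h)

private lemma entArrAnti (z : A) {x y : A} (h : arr x y ∈ S) :
    arr (arr y z) (arr x z) ∈ S := by
  have hW1 : arr (arr y z) (arr x (arr y z)) ∈ S := hS.up hS.kmem (kle (arr y z) x)
  have hW2 : arr (arr y z) (arr (arr x y) (arr x z)) ∈ S :=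
    entTrans hA hS hW1 (hS.up hS.smem (sle x y z))
  exact entMp hA hS hW2 (entOfS hA hS _ h)

private lemma pdIntro (u : A) : arr u (pd arr u) ∈ S := hS.up hS.kmem (kle u ⊤)

private lemma pdElim (u : A) : arr (pd arr u) u ∈ S :=
  entMp hA hS (entRefl hA hS (pd arr u) : arr (pd arr u) (arr ⊤ u) ∈ S)
    (arrTop hA hS _)

private lemma absK {t σ : A} (x : A) (h : t ≤ σ) :
    appA arr (kC arr) t ≤ arr x σ :=
  apple (le_trans (kle t x) (hA.mono le_rfl (hA.mono le_rfl h)))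

private lemma apSle {t x p q : A} (h : t ≤ arr x (arr p q)) :
    appA arr (sC arr) t ≤ arr (arr x p) (arr x q) :=
  apple (le_trans (sle x p q) (hA.mono h le_rfl))

private lemma absS {t1 t2 x p q : A} (h1 : t1 ≤ arr x (arr p q)) (h2 : t2 ≤ arr x p) :
    appA arr (appA arr (sC arr) t1) t2 ≤ arr x q :=
  apple (le_trans (apSle hA hS h1) (hA.mono h2 le_rfl))

end Aux

/-- Composition combinator: `cmpA f g := S·(K·f)·g`. -/
private def cmpA {A : Type*} [CompleteLattice A] (arr : A → A → A) (f g : A) : A :=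
  appA arr (appA arr (sC arr) (appA arr (kC arr) f)) g

/-- The "reversed application" combinator `R ≤ w → (u → u·w)`. -/
private def Rc {A : Type*} [CompleteLattice A] (arr : A → A → A) : A :=
  appA arr (appA arr (sC arr) (appA arr (kC arr) (appA arr (sC arr) (aC arr)))) (kC arr)

private def G1 {A : Type*} [CompleteLattice A] (arr : A → A → A) : A :=
  cmpA arr (Rc arr) (kC arr)

private def G3 {A : Type*} [CompleteLattice A] (arr : A → A → A) : A :=
  cmpA arr (sC arr) (cmpA arr (kC arr) (G1 arr))

private def f0 {A : Type*} [CompleteLattice A] (arr : A → A → A) : A :=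
  appA arr (sC arr) (appA arr (kC arr) (kC arr))

/-- The pairing combinator `T ≤ c → (a → (z → ∂(z·∂c·∂a)))`. -/
private def Tc {A : Type*} [CompleteLattice A] (arr : A → A → A) : A :=
  cmpA arr (appA arr (sC arr) (appA arr (kC arr) (f0 arr)))
    (cmpA arr (appA arr (sC arr) (G3 arr)) (cmpA arr (kC arr) (G1 arr)))

section Aux2
variable {A : Type*} [CompleteLattice A] {arr : A → A → A} {S : Set A}
variable (hA : IsArrow arr) (hS : IsSeparator arr S)
include hA hS
set_option linter.unusedSectionVars false

private lemma cmpLe {f g u v w : A} (hf : f ≤ arr v w) (hg : g ≤ arr u v) :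
    cmpA arr f g ≤ arr u w :=
  absS hA hS (absK hA hS u hf) hg

private lemma cmpMem {f g : A} (hf : f ∈ S) (hg : g ∈ S) : cmpA arr f g ∈ S :=
  Sapp hA hS (Sapp hA hS hS.smem (Sapp hA hS hS.kmem hf)) hg

private lemma RcLe (w u : A) : Rc arr ≤ arr w (arr u (appA arr u w)) :=
  absS hA hS (absK hA hS w (apSle hA hS (aCapp hA hS u w))) (kle w u)

private lemma RcMem : Rc arr ∈ S :=
  Sapp hA hS (Sapp hA hS hS.smem (Sapp hA hS hS.kmem (Sapp hA hS hS.smem hS.amem))) hS.kmem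

private lemma G1le (x u : A) : G1 arr ≤ arr x (arr u (appA arr u (pd arr x))) :=
  cmpLe hA hS (RcLe hA hS (pd arr x) u) (kle x ⊤)

private lemma G1mem : G1 arr ∈ S := cmpMem hA hS (RcMem hA hS) hS.kmem

private lemma G3le (x y u : A) :
    G3 arr ≤ arr x (arr (arr y u) (arr y (appA arr u (pd arr x)))) :=
  cmpLe hA hS (sle y u (appA arr u (pd arr x)))
    (cmpLe hA hS (kle (arr u (appA arr u (pd arr x))) y) (G1le hA hS x u))

private lemma G3mem : G3 arr ∈ S :=
  cmpMem hA hS hS.smem (cmpMem hA hS hS.kmem (G1mem hA hS))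

private lemma f0le (z m : A) : f0 arr ≤ arr (arr z m) (arr z (pd arr m)) :=
  apSle hA hS (absK hA hS z (kle m ⊤))

private lemma f0mem : f0 arr ∈ S :=
  Sapp hA hS hS.smem (Sapp hA hS hS.kmem hS.kmem)

private lemma TcLe (c a z : A) :
    Tc arr ≤ arr c (arr a (arr z
      (pd arr (appA arr (appA arr z (pd arr c)) (pd arr a))))) := by
  set p4 := appA arr z (pd arr c) with hp4
  set σ4 := appA arr p4 (pd arr a) with hσ4
  have h1 : G1 arr ≤ arr c (arr z p4) := G1le hA hS c z
  have hY : cmpA arr (kC arr) (G1 arr) ≤ arr c (arr a (arr z p4)) :=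
    cmpLe hA hS (kle (arr z p4) a) h1
  have hG3 : G3 arr ≤ arr a (arr (arr z p4) (arr z σ4)) := G3le hA hS a z p4
  have hSG3 : appA arr (sC arr) (G3 arr) ≤
      arr (arr a (arr z p4)) (arr a (arr z σ4)) := apSle hA hS hG3
  have hX : cmpA arr (appA arr (sC arr) (G3 arr)) (cmpA arr (kC arr) (G1 arr)) ≤
      arr c (arr a (arr z σ4)) := cmpLe hA hS hSG3 hY
  have hf : appA arr (sC arr) (appA arr (kC arr) (f0 arr)) ≤
      arr (arr a (arr z σ4)) (arr a (arr z (pd arr σ4))) :=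
    apSle hA hS (absK hA hS a (f0le hA hS z σ4))
  exact cmpLe hA hS hf hX

private lemma TcMem : Tc arr ∈ S :=
  cmpMem hA hS (Sapp hA hS hS.smem (Sapp hA hS hS.kmem (f0mem hA hS)))
    (cmpMem hA hS (Sapp hA hS hS.smem (G3mem hA hS))
      (cmpMem hA hS hS.kmem (G1mem hA hS)))

end Aux2

/-- Proposition 5.1 (part): `→` is the Heyting implication for the logical preorder. -/
theorem stmt15 {A : Type*} [CompleteLattice A] {arr : A → A → A} {S : Set A}
    (hA : IsArrow arr) (hS : IsSeparator arr S) (a b c : A) :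
    entails arr S c (arr a b) ↔ entails arr S (meetA arr c a) b := by
  constructor
  · intro h
    have hab : arr (arr a b) (arr (pd arr a) (pd arr b)) ∈ S :=
      entTrans hA hS (entArrMono hA hS a (pdIntro hA hS b))
        (entArrAnti hA hS (pd arr b) (pdElim hA hS a))
    have h1 : arr (pd arr c) (arr (pd arr a) (pd arr b)) ∈ S :=
      entTrans hA hS (entTrans hA hS (pdElim hA hS c) h) hab
    set t := arr (pd arr c) (arr (pd arr a) (pd arr b)) with ht
    have e1 : appA arr t (pd arr c) ≤ arr (pd arr a) (pd arr b) := apple le_rfl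
    have e2 : appA arr (appA arr t (pd arr c)) (pd arr a) ≤ pd arr b := apple e1
    have e3 : meetA arr c a ≤ arr t (pd arr (pd arr b)) :=
      le_trans (iInf_le _ t) (hA.mono le_rfl (hA.mono le_rfl e2))
    have h5 : arr (meetA arr c a) (pd arr (pd arr b)) ∈ S :=
      entMp hA hS (entOfLe hA hS e3) (entOfS hA hS _ h1)
    exact entTrans hA hS h5 (entTrans hA hS (pdElim hA hS (pd arr b)) (pdElim hA hS b))
  · intro h
    have hQ : (⨅ z : A, arr c (arr a (arr z
        (pd arr (appA arr (appA arr z (pd arr c)) (pd arr a)))))) ∈ S :=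
      hS.up (TcMem hA hS) (le_iInf fun z => TcLe hA hS c a z)
    have hB1 : (Set.range fun z : A => arr a (arr z
        (pd arr (appA arr (appA arr z (pd arr c)) (pd arr a))))) ⊆
        Set.range fun p : A × A => arr p.1 p.2 := by
      rintro e ⟨z, rfl⟩; exact ⟨(a, _), rfl⟩
    have s1 := hS.up hS.amem (ale c hB1)
    rw [iInf_range, sInf_range] at s1
    have s1' := hS.mp s1 hQ
    have hB2 : (Set.range fun z : A => arr z
        (pd arr (appA arr (appA arr z (pd arr c)) (pd arr a)))) ⊆
        Set.range fun p : A × A => arr p.1 p.2 := by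
      rintro e ⟨z, rfl⟩; exact ⟨(z, _), rfl⟩
    have s2 := hS.up hS.amem (ale a hB2)
    rw [iInf_range, sInf_range] at s2
    have s3 : arr c (arr a (meetA arr c a)) ∈ S := entTrans hA hS s1' s2
    exact entTrans hA hS s3 (entArrMono hA hS a h)
end
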